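/- arXiv:2407.20889 — 3 statements merged into one kernel-verified Lean document; each statement's English description precedes it below -/
import Mathlib

section
/- Let φ(a,b) be a formula of the language INQ⁻ (connectives ∧, ⩔, ⊗, ⊥, ⊤, ¬, ?, no implication) in which the propositional letters p and q do not occur. In the model M_{pq} (W = {w₁,w₂,w₃}, V(w₁)={p}, V(w₂)={q}, V(w₃)=∅), if the substitution instance φ(?p, ?q) is not equivalent to ⊥ in M_{pq} (i.e., some nonempty state supports it), then each singleton state {wᵢ} (i = 1,2,3) supports φ(?p, ?q). -/
/-- Formulas of propositional inquisitive logic (full language INQ⁺). -/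
inductive Form (α : Type) : Type
  | atom : α → Form α
  | bot  : Form α
  | top  : Form α
  | and  : Form α → Form α → Form α
  | or   : Form α → Form α → Form α        -- inquisitive disjunction ⩔
  | tensor : Form α → Form α → Form α      -- tensor ⊗
  | impl : Form α → Form α → Form α
  | neg  : Form α → Form α
  | quest : Form α → Form α                -- ?

namespace Form

/-- A size measure making `?ψ` bigger than `¬ψ`. -/
def sz {α : Type} : Form α → Nat
  | atom _ => 1
  | bot => 1
  | top => 1
  | and ψ χ => ψ.sz + χ.sz + 1
  | or ψ χ => ψ.sz + χ.sz + 1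
  | tensor ψ χ => ψ.sz + χ.sz + 1
  | impl ψ χ => ψ.sz + χ.sz + 1
  | neg ψ => ψ.sz + 1
  | quest ψ => ψ.sz + 2

end Form

/-- Support relation of inquisitive semantics, over a model with worlds `W`
and valuation `V`. -/
def supports {W α : Type} (V : W → α → Prop) : Set W → Form α → Prop
  | s, .atom p => ∀ w ∈ s, V w p
  | s, .bot => s = ∅
  | _, .top => True
  | s, .and ψ χ => supports V s ψ ∧ supports V s χ
  | s, .or ψ χ => supports V s ψ ∨ supports V s χ
  | s, .tensor ψ χ => ∃ t₁ t₂, supports V t₁ ψ ∧ supports V t₂ χ ∧ s = t₁ ∪ t₂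
  | s, .impl ψ χ => ∀ t ⊆ s, supports V t ψ → supports V t χ
  | s, .neg ψ => ∀ t ⊆ s, supports V t ψ → t = ∅
  | s, .quest ψ => supports V s ψ ∨ supports V s (.neg ψ)
  termination_by s φ => φ.sz
  decreasing_by all_goals simp [Form.sz] <;> omega

/-- The inquisitive proposition of a formula: the set of supporting states. -/
def inqProp {W α : Type} (V : W → α → Prop) (φ : Form α) : Set (Set W) :=
  {s | supports V s φ}

namespace Form

/-- `φ` contains no occurrence of the implication connective (language INQ⁻). -/
def noImpl {α : Type} : Form α → Prop
  | atom _ => True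
  | bot => True
  | top => True
  | and ψ χ => ψ.noImpl ∧ χ.noImpl
  | or ψ χ => ψ.noImpl ∧ χ.noImpl
  | tensor ψ χ => ψ.noImpl ∧ χ.noImpl
  | impl _ _ => False
  | neg ψ => ψ.noImpl
  | quest ψ => ψ.noImpl

/-- The set of propositional letters occurring in a formula. -/
def atoms {α : Type} : Form α → Set α
  | atom r => {r}
  | bot => ∅
  | top => ∅
  | and ψ χ => ψ.atoms ∪ χ.atoms
  | or ψ χ => ψ.atoms ∪ χ.atoms
  | tensor ψ χ => ψ.atoms ∪ χ.atoms
  | impl ψ χ => ψ.atoms ∪ χ.atoms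
  | neg ψ => ψ.atoms
  | quest ψ => ψ.atoms

end Form

/-- Substitution of formulas `ψ`, `χ` for the designated atoms `a`, `b`:
`substAB a b ψ χ φ` is the instance `φ(ψ,χ)` of the template `φ(a,b)`. -/
def substAB {α : Type} [DecidableEq α] (a b : α) (ψ χ : Form α) :
    Form α → Form α
  | .atom r => if r = a then ψ else if r = b then χ else .atom r
  | .bot => .bot
  | .top => .top
  | .and θ η => .and (substAB a b ψ χ θ) (substAB a b ψ χ η)
  | .or θ η => .or (substAB a b ψ χ θ) (substAB a b ψ χ η)
  | .tensor θ η => .tensor (substAB a b ψ χ θ) (substAB a b ψ χ η)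
  | .impl θ η => .impl (substAB a b ψ χ θ) (substAB a b ψ χ η)
  | .neg θ => .neg (substAB a b ψ χ θ)
  | .quest θ => .quest (substAB a b ψ χ θ)

/-- The model `M_{pq}`: worlds `w₁ = 0`, `w₂ = 1`, `w₃ = 2`, with
`V(w₁) = {p}`, `V(w₂) = {q}`, `V(w₃) = ∅`. -/
def Vpq {α : Type} (p q : α) : Fin 3 → α → Prop :=
  fun w r => (w = 0 ∧ r = p) ∨ (w = 1 ∧ r = q)



section Aux

variable {α : Type} [DecidableEq α]

lemma sup_atom {W α : Type} (V : W → α → Prop) (s : Set W) (r : α) :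
    supports V s (.atom r) ↔ ∀ w ∈ s, V w r := by rw [supports]

lemma sup_bot {W α : Type} (V : W → α → Prop) (s : Set W) :
    supports V s (.bot) ↔ s = ∅ := by rw [supports]

lemma sup_top {W α : Type} (V : W → α → Prop) (s : Set W) :
    supports V s (.top) ↔ True := by rw [supports]

lemma sup_and {W α : Type} (V : W → α → Prop) (s : Set W) (F G : Form α) :
    supports V s (.and F G) ↔ supports V s F ∧ supports V s G := by
  rw [supports]

lemma sup_or {W α : Type} (V : W → α → Prop) (s : Set W) (F G : Form α) :
    supports V s (.or F G) ↔ supports V s F ∨ supports V s G := by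
  rw [supports]

lemma sup_tensor {W α : Type} (V : W → α → Prop) (s : Set W) (F G : Form α) :
    supports V s (.tensor F G) ↔
      ∃ t₁ t₂, supports V t₁ F ∧ supports V t₂ G ∧ s = t₁ ∪ t₂ := by
  rw [supports]

lemma sup_neg {W α : Type} (V : W → α → Prop) (s : Set W) (F : Form α) :
    supports V s (.neg F) ↔ ∀ t ⊆ s, supports V t F → t = ∅ := by
  rw [supports]

lemma sup_quest {W α : Type} (V : W → α → Prop) (s : Set W) (F : Form α) :
    supports V s (.quest F) ↔ supports V s F ∨ supports V s (.neg F) := by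
  rw [sup_neg, supports, sup_neg]

/-- The key invariant: the empty state supports `F`, support is downward
closed, and if some nonempty state supports `F` then every singleton does. -/
def Good (p q : α) (F : Form α) : Prop :=
  supports (Vpq p q) (∅ : Set (Fin 3)) F ∧
  (∀ s t : Set (Fin 3), t ⊆ s → supports (Vpq p q) s F →
      supports (Vpq p q) t F) ∧
  ((∃ s : Set (Fin 3), s ≠ ∅ ∧ supports (Vpq p q) s F) →
    ∀ i : Fin 3, supports (Vpq p q) ({i} : Set (Fin 3)) F)

lemma good_neg {p q : α} {F : Form α} (h : Good p q F) : Good p q (.neg F) := by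
  obtain ⟨he, hd, hs⟩ := h
  unfold Good
  simp only [sup_neg]
  refine ⟨?_, ?_, ?_⟩
  · intro t ht _
    exact Set.subset_empty_iff.mp ht
  · intro s t hts hsF u hut huF
    exact hsF u (hut.trans hts) huF
  · rintro ⟨s, hsne, hsneg⟩ i t hti htF
    by_contra hte
    have hall := hs ⟨t, hte, htF⟩
    obtain ⟨j, hj⟩ := Set.nonempty_iff_ne_empty.mpr hsne
    have : ({j} : Set (Fin 3)) = ∅ :=
      hsneg {j} (Set.singleton_subset_iff.mpr hj) (hall j)
    exact Set.singleton_ne_empty j this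

lemma good_quest {p q : α} {F : Form α} (h : Good p q F) :
    Good p q (.quest F) := by
  have hn := good_neg h
  obtain ⟨he, hd, hs⟩ := h
  obtain ⟨hne, hnd, hns⟩ := hn
  unfold Good
  simp only [sup_quest]
  refine ⟨Or.inl he, ?_, ?_⟩
  · rintro s t hts (h1 | h1)
    · exact Or.inl (hd s t hts h1)
    · exact Or.inr (hnd s t hts h1)
  · rintro ⟨s, hsne, (h1 | h1)⟩ i
    · exact Or.inl (hs ⟨s, hsne, h1⟩ i)
    · exact Or.inr (hns ⟨s, hsne, h1⟩ i)

lemma good_and {p q : α} {F G : Form α} (hF : Good p q F) (hG : Good p q G) :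
    Good p q (.and F G) := by
  obtain ⟨he1, hd1, hs1⟩ := hF
  obtain ⟨he2, hd2, hs2⟩ := hG
  unfold Good
  simp only [sup_and]
  refine ⟨⟨he1, he2⟩, ?_, ?_⟩
  · rintro s t hts ⟨h1, h2⟩
    exact ⟨hd1 s t hts h1, hd2 s t hts h2⟩
  · rintro ⟨s, hsne, h1, h2⟩ i
    exact ⟨hs1 ⟨s, hsne, h1⟩ i, hs2 ⟨s, hsne, h2⟩ i⟩

lemma good_or {p q : α} {F G : Form α} (hF : Good p q F) (hG : Good p q G) :
    Good p q (.or F G) := by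
  obtain ⟨he1, hd1, hs1⟩ := hF
  obtain ⟨he2, hd2, hs2⟩ := hG
  unfold Good
  simp only [sup_or]
  refine ⟨Or.inl he1, ?_, ?_⟩
  · rintro s t hts (h1 | h1)
    · exact Or.inl (hd1 s t hts h1)
    · exact Or.inr (hd2 s t hts h1)
  · rintro ⟨s, hsne, (h1 | h1)⟩ i
    · exact Or.inl (hs1 ⟨s, hsne, h1⟩ i)
    · exact Or.inr (hs2 ⟨s, hsne, h1⟩ i)

lemma good_tensor {p q : α} {F G : Form α} (hF : Good p q F) (hG : Good p q G) :
    Good p q (.tensor F G) := by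
  obtain ⟨he1, hd1, hs1⟩ := hF
  obtain ⟨he2, hd2, hs2⟩ := hG
  unfold Good
  simp only [sup_tensor]
  refine ⟨⟨∅, ∅, he1, he2, by simp⟩, ?_, ?_⟩
  · rintro s t hts ⟨t1, t2, h1, h2, rfl⟩
    refine ⟨t ∩ t1, t ∩ t2, hd1 t1 _ Set.inter_subset_right h1,
      hd2 t2 _ Set.inter_subset_right h2, ?_⟩
    rw [← Set.inter_union_distrib_left]
    exact (Set.inter_eq_left.mpr hts).symm
  · rintro ⟨s, hsne, t1, t2, h1, h2, rfl⟩ i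
    rcases Set.nonempty_iff_ne_empty.mpr hsne with ⟨j, hj | hj⟩
    · exact ⟨{i}, ∅, hs1 ⟨t1, Set.nonempty_iff_ne_empty.mp ⟨j, hj⟩, h1⟩ i,
        he2, by simp⟩
    · exact ⟨∅, {i}, he1,
        hs2 ⟨t2, Set.nonempty_iff_ne_empty.mp ⟨j, hj⟩, h2⟩ i, by simp⟩

lemma good_qatom_p {p q : α} (hpq : p ≠ q) :
    Good p q (.quest (.atom p)) := by
  unfold Good
  simp only [sup_quest, sup_neg, sup_atom]
  refine ⟨Or.inl (by simp), ?_, ?_⟩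
  · rintro s t hts (h1 | h1)
    · exact Or.inl fun w hw => h1 w (hts hw)
    · exact Or.inr fun u hut huF => h1 u (hut.trans hts) huF
  · rintro - i
    fin_cases i
    · exact Or.inl (by simp [Vpq])
    · refine Or.inr ?_
      intro t hti htF
      by_contra hte
      obtain ⟨j, hj⟩ := Set.nonempty_iff_ne_empty.mpr hte
      have := htF j hj
      have hj1 : j = (1 : Fin 3) := hti hj
      subst hj1
      simp [Vpq] at this
      exact hpq this
    · refine Or.inr ?_
      intro t hti htF
      by_contra hte
      obtain ⟨j, hj⟩ := Set.nonempty_iff_ne_empty.mpr hte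
      have := htF j hj
      have hj1 : j = (2 : Fin 3) := hti hj
      subst hj1
      simp [Vpq] at this

lemma good_qatom_q {p q : α} (hpq : p ≠ q) :
    Good p q (.quest (.atom q)) := by
  unfold Good
  simp only [sup_quest, sup_neg, sup_atom]
  refine ⟨Or.inl (by simp), ?_, ?_⟩
  · rintro s t hts (h1 | h1)
    · exact Or.inl fun w hw => h1 w (hts hw)
    · exact Or.inr fun u hut huF => h1 u (hut.trans hts) huF
  · rintro - i
    fin_cases i
    · refine Or.inr ?_
      intro t hti htF
      by_contra hte
      obtain ⟨j, hj⟩ := Set.nonempty_iff_ne_empty.mpr hte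
      have := htF j hj
      have hj1 : j = (0 : Fin 3) := hti hj
      subst hj1
      simp [Vpq] at this
      exact hpq this.symm
    · exact Or.inl (by simp [Vpq])
    · refine Or.inr ?_
      intro t hti htF
      by_contra hte
      obtain ⟨j, hj⟩ := Set.nonempty_iff_ne_empty.mpr hte
      have := htF j hj
      have hj1 : j = (2 : Fin 3) := hti hj
      subst hj1
      simp [Vpq] at this

lemma good_atom_other {p q r : α} (hrp : r ≠ p) (hrq : r ≠ q) :
    Good p q (.atom r) := by
  unfold Good
  simp only [sup_atom]
  refine ⟨by simp, ?_, ?_⟩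
  · intro s t hts h w hw
    exact h w (hts hw)
  · rintro ⟨s, hsne, h⟩ i
    obtain ⟨j, hj⟩ := Set.nonempty_iff_ne_empty.mpr hsne
    rcases h j hj with ⟨-, h1⟩ | ⟨-, h1⟩
    · exact absurd h1 hrp
    · exact absurd h1 hrq

lemma good_bot {p q : α} : Good p q (Form.bot : Form α) := by
  unfold Good
  simp only [sup_bot]
  refine ⟨by trivial, ?_, ?_⟩
  · rintro s t hts rfl
    exact Set.subset_empty_iff.mp hts
  · rintro ⟨s, hsne, rfl⟩
    exact absurd rfl hsne

lemma good_top {p q : α} : Good p q (Form.top : Form α) := by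
  unfold Good
  simp only [sup_top]
  exact ⟨trivial, fun _ _ _ _ => trivial, fun _ _ => trivial⟩

lemma good_subst {p q a b : α} (hpq : p ≠ q) :
    ∀ φ : Form α, φ.noImpl → p ∉ φ.atoms → q ∉ φ.atoms →
      Good p q (substAB a b (.quest (.atom p)) (.quest (.atom q)) φ) := by
  intro φ
  induction φ with
  | atom r =>
    intro _ hp hq
    simp only [Form.atoms, Set.mem_singleton_iff] at hp hq
    simp only [substAB]
    split
    · exact good_qatom_p hpq
    · split
      · exact good_qatom_q hpq
      · exact good_atom_other (fun h => hp h.symm) (fun h => hq h.symm)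
  | bot => intro _ _ _; exact good_bot
  | top => intro _ _ _; exact good_top
  | and ψ χ ihψ ihχ =>
    rintro ⟨h1, h2⟩ hp hq
    simp only [Form.atoms, Set.mem_union] at hp hq
    exact good_and (ihψ h1 (fun h => hp (Or.inl h)) (fun h => hq (Or.inl h)))
      (ihχ h2 (fun h => hp (Or.inr h)) (fun h => hq (Or.inr h)))
  | or ψ χ ihψ ihχ =>
    rintro ⟨h1, h2⟩ hp hq
    simp only [Form.atoms, Set.mem_union] at hp hq
    exact good_or (ihψ h1 (fun h => hp (Or.inl h)) (fun h => hq (Or.inl h)))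
      (ihχ h2 (fun h => hp (Or.inr h)) (fun h => hq (Or.inr h)))
  | tensor ψ χ ihψ ihχ =>
    rintro ⟨h1, h2⟩ hp hq
    simp only [Form.atoms, Set.mem_union] at hp hq
    exact good_tensor (ihψ h1 (fun h => hp (Or.inl h)) (fun h => hq (Or.inl h)))
      (ihχ h2 (fun h => hp (Or.inr h)) (fun h => hq (Or.inr h)))
  | impl ψ χ ihψ ihχ => rintro h; exact absurd h id
  | neg ψ ihψ =>
    intro h1 hp hq
    exact good_neg (ihψ h1 hp hq)
  | quest ψ ihψ =>
    intro h1 hp hq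
    exact good_quest (ihψ h1 hp hq)

end Aux

/-- if φ(a,b) is an INQ⁻ formula without occurrences of p, q,
and φ(?p,?q) is not equivalent to ⊥ in M_pq (some nonempty state supports it),
then each singleton state supports φ(?p,?q). -/
theorem singletons_support {α : Type} [DecidableEq α] (p q a b : α)
    (hpq : p ≠ q) (φ : Form α) (hni : φ.noImpl)
    (hp : p ∉ φ.atoms) (hq : q ∉ φ.atoms)
    (hne : ∃ s : Set (Fin 3), s ≠ ∅ ∧
      supports (Vpq p q) s
        (substAB a b (Form.quest (Form.atom p)) (Form.quest (Form.atom q)) φ)) :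
    ∀ i : Fin 3,
      supports (Vpq p q) ({i} : Set (Fin 3))
        (substAB a b (Form.quest (Form.atom p)) (Form.quest (Form.atom q)) φ) := by
  exact (good_subst hpq φ hni hp hq).2.2 hne
end

section
/- Inquisitive implication → is not definable in INQ⁻: there is no INQ⁻ formula template φ(a,b) such that for all INQ⁻ formulas η, θ, the substitution instance φ(η,θ) is equivalent (in all inquisitive models) to η → θ. -/
section Aux

variable {W α : Type}

lemma supports_atom (V : W → α → Prop) (s : Set W) (p : α) :
    supports V s (.atom p) ↔ ∀ w ∈ s, V w p := by simp [supports]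
lemma supports_bot (V : W → α → Prop) (s : Set W) :
    supports V s (.bot : Form α) ↔ s = ∅ := by simp [supports]
lemma supports_top (V : W → α → Prop) (s : Set W) :
    supports V s (.top : Form α) ↔ True := by simp [supports]
lemma supports_and (V : W → α → Prop) (s : Set W) (ψ χ : Form α) :
    supports V s (.and ψ χ) ↔ supports V s ψ ∧ supports V s χ := by simp [supports]
lemma supports_or (V : W → α → Prop) (s : Set W) (ψ χ : Form α) :
    supports V s (.or ψ χ) ↔ supports V s ψ ∨ supports V s χ := by simp [supports]
lemma supports_tensor (V : W → α → Prop) (s : Set W) (ψ χ : Form α) :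
    supports V s (.tensor ψ χ) ↔
      ∃ t₁ t₂, supports V t₁ ψ ∧ supports V t₂ χ ∧ s = t₁ ∪ t₂ := by simp [supports]
lemma supports_impl (V : W → α → Prop) (s : Set W) (ψ χ : Form α) :
    supports V s (.impl ψ χ) ↔
      ∀ t ⊆ s, supports V t ψ → supports V t χ := by simp [supports]
lemma supports_neg (V : W → α → Prop) (s : Set W) (ψ : Form α) :
    supports V s (.neg ψ) ↔ ∀ t ⊆ s, supports V t ψ → t = ∅ := by simp [supports]
lemma supports_quest (V : W → α → Prop) (s : Set W) (ψ : Form α) :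
    supports V s (.quest ψ) ↔ supports V s ψ ∨ supports V s (.neg ψ) := by simp [supports]

/-- The empty state supports everything. -/
lemma supports_empty (V : W → α → Prop) : ∀ φ : Form α, supports V (∅ : Set W) φ := by
  intro φ
  induction φ with
  | atom p => rw [supports_atom]; simp
  | bot => rw [supports_bot]
  | top => rw [supports_top]; trivial
  | and ψ χ ih1 ih2 => rw [supports_and]; exact ⟨ih1, ih2⟩
  | or ψ χ ih1 ih2 => rw [supports_or]; exact Or.inl ih1
  | tensor ψ χ ih1 ih2 =>
      rw [supports_tensor]; exact ⟨∅, ∅, ih1, ih2, by simp⟩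
  | impl ψ χ ih1 ih2 =>
      rw [supports_impl]
      intro t ht _
      have : t = ∅ := Set.subset_eq_empty ht rfl
      rw [this]; exact ih2
  | neg ψ ih =>
      rw [supports_neg]
      intro t ht _
      exact Set.subset_eq_empty ht rfl
  | quest ψ ih => rw [supports_quest]; exact Or.inl ih

/-- Persistence: support is downward closed. -/
lemma supports_mono (V : W → α → Prop) :
    ∀ (φ : Form α) (s t : Set W), t ⊆ s → supports V s φ → supports V t φ := by
  intro φ
  induction φ with
  | atom p =>
      intro s t hts h
      rw [supports_atom] at h ⊢
      exact fun w hw => h w (hts hw)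
  | bot =>
      intro s t hts h
      rw [supports_bot] at h ⊢
      rw [h] at hts; exact Set.subset_eq_empty hts rfl
  | top => intro s t _ _; rw [supports_top]; trivial
  | and ψ χ ih1 ih2 =>
      intro s t hts h
      rw [supports_and] at h ⊢
      exact ⟨ih1 s t hts h.1, ih2 s t hts h.2⟩
  | or ψ χ ih1 ih2 =>
      intro s t hts h
      rw [supports_or] at h ⊢
      rcases h with h | h
      · exact Or.inl (ih1 s t hts h)
      · exact Or.inr (ih2 s t hts h)
  | tensor ψ χ ih1 ih2 =>
      intro s t hts h
      rw [supports_tensor] at h ⊢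
      obtain ⟨t₁, t₂, h1, h2, hs⟩ := h
      refine ⟨t₁ ∩ t, t₂ ∩ t, ih1 _ _ Set.inter_subset_left h1,
        ih2 _ _ Set.inter_subset_left h2, ?_⟩
      rw [← Set.union_inter_distrib_right, ← hs]
      exact (Set.inter_eq_right.mpr hts).symm
  | impl ψ χ ih1 ih2 =>
      intro s t hts h
      rw [supports_impl] at h ⊢
      exact fun u hu hψ => h u (hu.trans hts) hψ
  | neg ψ ih =>
      intro s t hts h
      rw [supports_neg] at h ⊢
      exact fun u hu hψ => h u (hu.trans hts) hψ
  | quest ψ ih =>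
      intro s t hts h
      rw [supports_quest] at h ⊢
      rcases h with h | h
      · exact Or.inl (ih s t hts h)
      · refine Or.inr ?_
        rw [supports_neg] at h ⊢
        exact fun u hu hψ => h u (hu.trans hts) hψ

/-- A singleton supporting a tensor supports one of the components. -/
lemma tensor_singleton (V : W → α → Prop) (ψ χ : Form α) (w : W)
    (h : supports V ({w} : Set W) (.tensor ψ χ)) :
    supports V ({w} : Set W) ψ ∨ supports V ({w} : Set W) χ := by
  rw [supports_tensor] at h
  obtain ⟨t₁, t₂, h1, h2, hs⟩ := h
  have ht1 : t₁ ⊆ ({w} : Set W) := hs ▸ Set.subset_union_left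
  have ht2 : t₂ ⊆ ({w} : Set W) := hs ▸ Set.subset_union_right
  rcases Set.subset_singleton_iff_eq.mp ht1 with h1' | h1'
  · rcases Set.subset_singleton_iff_eq.mp ht2 with h2' | h2'
    · exfalso
      have : ({w} : Set W) = ∅ := by rw [hs, h1', h2']; simp
      exact (Set.singleton_nonempty w).ne_empty this
    · exact Or.inr (h2' ▸ h2)
  · exact Or.inl (h1' ▸ h1)

/-- Main monotonicity lemma: if `η'` dominates `η` but agrees with it on
singletons, then substituting `η'` for `η` in an implication-free template
is monotone (and agrees on singletons in the reverse direction). -/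
lemma subst_mono [DecidableEq α] (a b : α) (η η' θ : Form α) (V : W → α → Prop)
    (H1 : ∀ s : Set W, supports V s η → supports V s η')
    (H2 : ∀ w : W, supports V ({w} : Set W) η' → supports V ({w} : Set W) η) :
    ∀ ψ : Form α, ψ.noImpl →
      (∀ s : Set W, supports V s (substAB a b η θ ψ) → supports V s (substAB a b η' θ ψ)) ∧
      (∀ w : W, supports V ({w} : Set W) (substAB a b η' θ ψ) →
        supports V ({w} : Set W) (substAB a b η θ ψ)) := by
  intro ψ hψ
  induction ψ with
  | atom r =>
      by_cases hra : r = a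
      · simp only [substAB, if_pos hra]
        exact ⟨H1, H2⟩
      · by_cases hrb : r = b
        · simp only [substAB, if_neg hra, if_pos hrb]
          exact ⟨fun s h => h, fun w h => h⟩
        · simp only [substAB, if_neg hra, if_neg hrb]
          exact ⟨fun s h => h, fun w h => h⟩
  | bot => exact ⟨fun s h => h, fun w h => h⟩
  | top => exact ⟨fun s h => h, fun w h => h⟩
  | and ψ₁ ψ₂ ih1 ih2 =>
      obtain ⟨m1, s1⟩ := ih1 hψ.1
      obtain ⟨m2, s2⟩ := ih2 hψ.2
      simp only [substAB, supports_and]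
      exact ⟨fun s h => ⟨m1 s h.1, m2 s h.2⟩, fun w h => ⟨s1 w h.1, s2 w h.2⟩⟩
  | or ψ₁ ψ₂ ih1 ih2 =>
      obtain ⟨m1, s1⟩ := ih1 hψ.1
      obtain ⟨m2, s2⟩ := ih2 hψ.2
      simp only [substAB, supports_or]
      constructor
      · intro s h; rcases h with h | h
        · exact Or.inl (m1 s h)
        · exact Or.inr (m2 s h)
      · intro w h; rcases h with h | h
        · exact Or.inl (s1 w h)
        · exact Or.inr (s2 w h)
  | tensor ψ₁ ψ₂ ih1 ih2 =>
      obtain ⟨m1, s1⟩ := ih1 hψ.1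
      obtain ⟨m2, s2⟩ := ih2 hψ.2
      constructor
      · intro s h
        rw [substAB, supports_tensor] at h ⊢
        obtain ⟨t₁, t₂, h1, h2, hs⟩ := h
        exact ⟨t₁, t₂, m1 t₁ h1, m2 t₂ h2, hs⟩
      · intro w h
        rw [substAB] at h
        rw [substAB, supports_tensor]
        rcases tensor_singleton V _ _ w h with h | h
        · exact ⟨{w}, ∅, s1 w h, supports_empty V _, by simp⟩
        · exact ⟨∅, {w}, supports_empty V _, s2 w h, by simp⟩
  | impl ψ₁ ψ₂ ih1 ih2 => exact absurd hψ not_false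
  | neg ψ₁ ih =>
      obtain ⟨m1, s1⟩ := ih hψ
      constructor
      · intro s h
        rw [substAB, supports_neg] at h ⊢
        intro t hts ht
        by_contra hne
        obtain ⟨w, hw⟩ := Set.nonempty_iff_ne_empty.mpr hne
        have hw' : ({w} : Set W) ⊆ t := Set.singleton_subset_iff.mpr hw
        have h1 : supports V ({w} : Set W) (substAB a b η' θ ψ₁) :=
          supports_mono V _ t {w} hw' ht
        have : ({w} : Set W) = ∅ := h {w} (hw'.trans hts) (s1 w h1)
        exact (Set.singleton_nonempty w).ne_empty this
      · intro w h
        rw [substAB, supports_neg] at h ⊢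
        intro t hts ht
        rcases Set.subset_singleton_iff_eq.mp hts with h' | h'
        · exact h'
        · exact h t hts (h' ▸ m1 {w} (h' ▸ ht))
  | quest ψ₁ ih =>
      obtain ⟨m1, s1⟩ := ih hψ
      have negm : ∀ s : Set W, supports V s (Form.neg (substAB a b η θ ψ₁)) →
          supports V s (Form.neg (substAB a b η' θ ψ₁)) := by
        intro s h
        rw [supports_neg] at h ⊢
        intro t hts ht
        by_contra hne
        obtain ⟨w, hw⟩ := Set.nonempty_iff_ne_empty.mpr hne
        have hw' : ({w} : Set W) ⊆ t := Set.singleton_subset_iff.mpr hw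
        have h1 : supports V ({w} : Set W) (substAB a b η' θ ψ₁) :=
          supports_mono V _ t {w} hw' ht
        have : ({w} : Set W) = ∅ := h {w} (hw'.trans hts) (s1 w h1)
        exact (Set.singleton_nonempty w).ne_empty this
      have negs : ∀ w : W, supports V ({w} : Set W) (Form.neg (substAB a b η' θ ψ₁)) →
          supports V ({w} : Set W) (Form.neg (substAB a b η θ ψ₁)) := by
        intro w h
        rw [supports_neg] at h ⊢
        intro t hts ht
        rcases Set.subset_singleton_iff_eq.mp hts with h' | h'
        · exact h'
        · exact h t hts (h' ▸ m1 {w} (h' ▸ ht))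
      constructor
      · intro s h
        rw [substAB, supports_quest] at h ⊢
        rcases h with h | h
        · exact Or.inl (m1 s h)
        · exact Or.inr (negm s h)
      · intro w h
        rw [substAB, supports_quest] at h ⊢
        rcases h with h | h
        · exact Or.inl (s1 w h)
        · exact Or.inr (negs w h)

end Aux

/-- inquisitive implication is not definable in INQ⁻: there is no
INQ⁻ template φ(a,b) such that φ(η,θ) is equivalent to η → θ, in every model,
for all INQ⁻ formulas η, θ. -/
theorem impl_not_definable :
    ¬ ∃ (a b : ℕ), a ≠ b ∧ ∃ φ : Form ℕ, φ.noImpl ∧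
      ∀ η θ : Form ℕ, η.noImpl → θ.noImpl →
        ∀ (W : Type) (V : W → ℕ → Prop) (s : Set W),
          supports V s (substAB a b η θ φ) ↔
            supports V s (Form.impl η θ) := by
  rintro ⟨a, b, hab, φ, hφ, H⟩
  -- Instantiate the template at η = a ⩔ b (resp. η' = a ⊗ b) and θ = a ⩔ b,
  -- in the model M_{ab} on worlds Fin 3.
  set η : Form ℕ := .or (.atom a) (.atom b) with hη
  set η' : Form ℕ := .tensor (.atom a) (.atom b) with hη'
  have hηni : η.noImpl := ⟨trivial, trivial⟩
  have hη'ni : η'.noImpl := ⟨trivial, trivial⟩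
  set V : Fin 3 → ℕ → Prop := Vpq a b with hV
  set s₀ : Set (Fin 3) := {0, 1} with hs₀
  -- η → η is a tautology, hence φ(η, η) is supported at s₀.
  have h1 : supports V s₀ (substAB a b η η φ) := by
    rw [H η η hηni hηni (Fin 3) V s₀, supports_impl]
    intro t _ h; exact h
  -- Monotonicity hypotheses for replacing η by η'.
  have H1 : ∀ s : Set (Fin 3), supports V s η → supports V s η' := by
    intro s h
    rw [hη, supports_or] at h
    rw [hη', supports_tensor]
    rcases h with h | h
    · exact ⟨s, ∅, h, supports_empty V _, by simp⟩
    · exact ⟨∅, s, supports_empty V _, h, by simp⟩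
  have H2 : ∀ w : Fin 3, supports V ({w} : Set (Fin 3)) η' →
      supports V ({w} : Set (Fin 3)) η := by
    intro w h
    rw [hη, supports_or]
    exact tensor_singleton V _ _ w h
  have h2 : supports V s₀ (substAB a b η' η φ) :=
    (subst_mono a b η η' η V H1 H2 φ hφ).1 s₀ h1
  -- Hence s₀ supports η' → η, i.e. (a ⊗ b) → (a ⩔ b).
  have h3 : supports V s₀ (Form.impl η' η) := by
    rw [← H η' η hη'ni hηni (Fin 3) V s₀]
    exact h2
  rw [supports_impl] at h3
  -- But s₀ itself supports a ⊗ b while not supporting a ⩔ b.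
  have hs0 : supports V s₀ η' := by
    rw [hη', supports_tensor]
    refine ⟨{0}, {1}, ?_, ?_, by rw [hs₀]; ext x; simp [or_comm]⟩
    · rw [supports_atom]
      intro w hw
      rw [Set.mem_singleton_iff] at hw
      subst hw
      exact Or.inl ⟨rfl, rfl⟩
    · rw [supports_atom]
      intro w hw
      rw [Set.mem_singleton_iff] at hw
      subst hw
      exact Or.inr ⟨rfl, rfl⟩
  have hcontra : supports V s₀ η := h3 s₀ (le_refl s₀) hs0
  rw [hη, supports_or, supports_atom, supports_atom] at hcontra
  rcases hcontra with h | h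
  · have := h 1 (by rw [hs₀]; simp)
    rcases this with ⟨h01, _⟩ | ⟨_, hba⟩
    · exact absurd h01 (by decide)
    · exact hab hba
  · have := h 0 (by rw [hs₀]; simp)
    rcases this with ⟨_, hba⟩ | ⟨h01, _⟩
    · exact hab hba.symm
    · exact absurd h01 (by decide)
end

section
/- Let W = {w₁,w₂,w₃} and C the downward closure of {{w₁,w₂},{w₃}}. If S, T ⊆ ℘(W) are downward closed and S ∩ T = C with S ≠ C and T ≠ C, then {S,T} = {A,B} where A = downward closure of {{w₁,w₂},{w₁,w₃}} and B = downward closure of {{w₁,w₂},{w₂,w₃}}. -/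
/-- A family of states is downward closed if it is closed under subsets. -/
def DownClosed {W : Type} (S : Set (Set W)) : Prop :=
  ∀ s ∈ S, ∀ t ⊆ s, t ∈ S

lemma classify3 (s : Set (Fin 3)) :
    (s ⊆ {0,1} ∨ s ⊆ {2}) ∨ s = {0,2} ∨ s = {1,2} ∨ s = {0,1,2} := by
  by_cases h0 : (0:Fin 3) ∈ s <;> by_cases h1 : (1:Fin 3) ∈ s <;> by_cases h2 : (2:Fin 3) ∈ s
  · exact Or.inr (Or.inr (Or.inr (by ext x; fin_cases x <;> simp_all)))
  · exact Or.inl (Or.inl (by intro x hx; fin_cases x <;> simp_all))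
  · exact Or.inr (Or.inl (by ext x; fin_cases x <;> simp_all))
  · exact Or.inl (Or.inl (by intro x hx; fin_cases x <;> simp_all))
  · exact Or.inr (Or.inr (Or.inl (by ext x; fin_cases x <;> simp_all)))
  · exact Or.inl (Or.inl (by intro x hx; fin_cases x <;> simp_all))
  · exact Or.inl (Or.inr (by intro x hx; fin_cases x <;> simp_all))
  · exact Or.inl (Or.inl (by intro x hx; fin_cases x <;> simp_all))

lemma notC02 : ¬ (({0,2} : Set (Fin 3)) ⊆ {0,1} ∨ ({0,2} : Set (Fin 3)) ⊆ {2}) := by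
  rintro (h | h)
  · have := h (show (2:Fin 3) ∈ ({0,2}:Set (Fin 3)) by simp); simp_all
  · have := h (show (0:Fin 3) ∈ ({0,2}:Set (Fin 3)) by simp); simp_all

lemma notC12 : ¬ (({1,2} : Set (Fin 3)) ⊆ {0,1} ∨ ({1,2} : Set (Fin 3)) ⊆ {2}) := by
  rintro (h | h)
  · have := h (show (2:Fin 3) ∈ ({1,2}:Set (Fin 3)) by simp); simp_all
  · have := h (show (1:Fin 3) ∈ ({1,2}:Set (Fin 3)) by simp); simp_all

lemma sub02_012 : ({0,2} : Set (Fin 3)) ⊆ {0,1,2} := by intro x hx; simp_all; tauto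
lemma sub12_012 : ({1,2} : Set (Fin 3)) ⊆ {0,1,2} := by intro x hx; simp_all
lemma sub2_02 : ({2} : Set (Fin 3)) ⊆ {0,2} := by intro x hx; simp_all
lemma sub2_12 : ({2} : Set (Fin 3)) ⊆ {1,2} := by intro x hx; simp_all

/-- Main half: if {0,2} ∈ S and {1,2} ∈ T then S = A and T = B. -/
lemma half (S T : Set (Set (Fin 3)))
    (hS : DownClosed S) (hT : DownClosed T)
    (hST : S ∩ T = {s : Set (Fin 3) | s ⊆ {0, 1} ∨ s ⊆ {2}})
    (h02 : ({0,2} : Set (Fin 3)) ∈ S) (h12 : ({1,2} : Set (Fin 3)) ∈ T) :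
    S = {s : Set (Fin 3) | s ⊆ {0, 1} ∨ s ⊆ {0, 2}} ∧
      T = {s : Set (Fin 3) | s ⊆ {0, 1} ∨ s ⊆ {1, 2}} := by
  have hCS : ∀ s : Set (Fin 3), (s ⊆ {0,1} ∨ s ⊆ {2}) → s ∈ S := by
    intro s h
    have : s ∈ S ∩ T := hST.symm ▸ h
    exact this.1
  have hCT : ∀ s : Set (Fin 3), (s ⊆ {0,1} ∨ s ⊆ {2}) → s ∈ T := by
    intro s h
    have : s ∈ S ∩ T := hST.symm ▸ h
    exact this.2
  have h12S : ({1,2} : Set (Fin 3)) ∉ S := by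
    intro h
    have hm : ({1,2} : Set (Fin 3)) ∈ S ∩ T := ⟨h, h12⟩
    rw [hST] at hm
    exact notC12 hm
  have h02T : ({0,2} : Set (Fin 3)) ∉ T := by
    intro h
    have hm : ({0,2} : Set (Fin 3)) ∈ S ∩ T := ⟨h02, h⟩
    rw [hST] at hm
    exact notC02 hm
  have h012S : ({0,1,2} : Set (Fin 3)) ∉ S := fun h => h12S (hS _ h _ sub12_012)
  have h012T : ({0,1,2} : Set (Fin 3)) ∉ T := fun h => h02T (hT _ h _ sub02_012)
  constructor
  · ext s
    simp only [Set.mem_setOf_eq]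
    constructor
    · intro hs
      rcases classify3 s with (h | h) | h | h | h
      · exact Or.inl h
      · exact Or.inr (h.trans sub2_02)
      · exact Or.inr (h ▸ subset_rfl)
      · exact absurd (h ▸ hs) h12S
      · exact absurd (h ▸ hs) h012S
    · rintro (h | h)
      · exact hCS s (Or.inl h)
      · exact hS _ h02 _ h
  · ext s
    simp only [Set.mem_setOf_eq]
    constructor
    · intro hs
      rcases classify3 s with (h | h) | h | h | h
      · exact Or.inl h
      · exact Or.inr (h.trans sub2_12)
      · exact absurd (h ▸ hs) h02T
      · exact Or.inr (h ▸ subset_rfl)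
      · exact absurd (h ▸ hs) h012T
    · rintro (h | h)
      · exact hCT s (Or.inl h)
      · exact hT _ h12 _ h

/-- with W = Fin 3 (w1 = 0, w2 = 1, w3 = 2) and C the downward
closure of {{w1,w2},{w3}}: if S, T are downward closed, S ∩ T = C, S ≠ C and
T ≠ C, then {S,T} = {A,B} with A, B the downward closures of
{{w1,w2},{w1,w3}} and {{w1,w2},{w2,w3}} respectively. -/
theorem C_decomposition (S T : Set (Set (Fin 3)))
    (hS : DownClosed S) (hT : DownClosed T)
    (hST : S ∩ T = {s : Set (Fin 3) | s ⊆ {0, 1} ∨ s ⊆ {2}})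
    (hSne : S ≠ {s : Set (Fin 3) | s ⊆ {0, 1} ∨ s ⊆ {2}})
    (hTne : T ≠ {s : Set (Fin 3) | s ⊆ {0, 1} ∨ s ⊆ {2}}) :
    (S = {s : Set (Fin 3) | s ⊆ {0, 1} ∨ s ⊆ {0, 2}} ∧
      T = {s : Set (Fin 3) | s ⊆ {0, 1} ∨ s ⊆ {1, 2}}) ∨
    (S = {s : Set (Fin 3) | s ⊆ {0, 1} ∨ s ⊆ {1, 2}} ∧
      T = {s : Set (Fin 3) | s ⊆ {0, 1} ∨ s ⊆ {0, 2}}) := by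
  have hTS : T ∩ S = {s : Set (Fin 3) | s ⊆ {0, 1} ∨ s ⊆ {2}} :=
    (Set.inter_comm T S).trans hST
  have hCS : ∀ s : Set (Fin 3), (s ⊆ {0,1} ∨ s ⊆ {2}) → s ∈ S := fun s h =>
    (show s ∈ S ∩ T from hST.symm ▸ h).1
  have hCT : ∀ s : Set (Fin 3), (s ⊆ {0,1} ∨ s ⊆ {2}) → s ∈ T := fun s h =>
    (show s ∈ S ∩ T from hST.symm ▸ h).2
  have hexS : ∃ s ∈ S, ¬(s ⊆ ({0,1} : Set (Fin 3)) ∨ s ⊆ ({2} : Set (Fin 3))) := by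
    by_contra h
    push_neg at h
    exact hSne (Set.ext fun s => ⟨fun hs => h s hs, fun hs => hCS s hs⟩)
  have hexT : ∃ s ∈ T, ¬(s ⊆ ({0,1} : Set (Fin 3)) ∨ s ⊆ ({2} : Set (Fin 3))) := by
    by_contra h
    push_neg at h
    exact hTne (Set.ext fun s => ⟨fun hs => h s hs, fun hs => hCT s hs⟩)
  obtain ⟨a, haS, haC⟩ := hexS
  obtain ⟨b, hbT, hbC⟩ := hexT
  have contra02 : ({0,2} : Set (Fin 3)) ∈ S → ({0,2} : Set (Fin 3)) ∈ T → False := by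
    intro h1 h2
    have hm : ({0,2} : Set (Fin 3)) ∈ S ∩ T := ⟨h1, h2⟩
    rw [hST] at hm; exact notC02 hm
  have contra12 : ({1,2} : Set (Fin 3)) ∈ S → ({1,2} : Set (Fin 3)) ∈ T → False := by
    intro h1 h2
    have hm : ({1,2} : Set (Fin 3)) ∈ S ∩ T := ⟨h1, h2⟩
    rw [hST] at hm; exact notC12 hm
  rcases classify3 a with hc | ha | ha | ha
  · exact absurd hc haC
  all_goals subst ha
  · -- {0,2} ∈ S
    rcases classify3 b with hc | hb | hb | hb
    · exact absurd hc hbC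
    · subst hb; exact absurd (contra02 haS hbT) not_false
    · subst hb; exact Or.inl (half S T hS hT hST haS hbT)
    · subst hb
      exact absurd (contra02 haS (hT _ hbT _ sub02_012)) not_false
  · -- {1,2} ∈ S
    rcases classify3 b with hc | hb | hb | hb
    · exact absurd hc hbC
    · subst hb
      obtain ⟨h1, h2⟩ := half T S hT hS hTS hbT haS
      exact Or.inr ⟨h2, h1⟩
    · subst hb; exact absurd (contra12 haS hbT) not_false
    · subst hb
      exact absurd (contra12 haS (hT _ hbT _ sub12_012)) not_false
  · -- {0,1,2} ∈ S
    have h02S := hS _ haS _ sub02_012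
    have h12S := hS _ haS _ sub12_012
    rcases classify3 b with hc | hb | hb | hb
    · exact absurd hc hbC
    · subst hb; exact absurd (contra02 h02S hbT) not_false
    · subst hb; exact absurd (contra12 h12S hbT) not_false
    · subst hb
      exact absurd (contra02 h02S (hT _ hbT _ sub02_012)) not_false
end
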